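/- If n, m ≥ 0 with n + m ≥ 2, then any support w(p_1,…,p_{n+m-1}) ∈ AP_{n+m} factors uniquely as w = w' · u · w'' where w' = w(p_1,…,p_{n-1}) ∈ AP_n, w'' = w^{op}(q^{n+1},…,q^{n+m-1}) ∈ AP_m^{op}, and u is a path in Q. Moreover p_n = a·u·b and q^n = a'·u·b' with a, a', b, b' nontrivial paths, so in particular u does not belong to I. -/

import Mathlib

/-!
Common framework for formalizing "Hochschild cohomology of triangular string
algebras and its ring structure" (Redondo–Román).

* Interval combinatorics model of Bardzell's `n`-concatenations along a directed
  path (a directed path is modelled by the line `ℕ`, a subpath by an interval,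
  and a relation by the interval it occupies).
* A combinatorial model of a bound quiver `(Q, I)` with `I` a monomial ideal
  generated by a reduced set `R` of paths: paths are nonempty composable lists
  of arrows, `AP_n` is the set of supports of `n`-concatenations, `𝒫` is the
  basis of `A = kQ/I` given by the paths not in `I`.
* The Hochschild complex `Hom_{E-E}(kAP_n, A) ≅ k(AP_n ∥ 𝒫)` of a (triangular)
  monomial algebra obtained from Bardzell's minimal resolution, with its
  differentials `F_n` realized as explicit matrices, and the Hochschild
  cohomology `HH^n(A)` defined as the cohomology of this complex (for monomial
  algebras this complex computes Hochschild cohomology, by Bardzell's theorem).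
-/

attribute [local instance] Classical.propDecidable

noncomputable section

namespace Paper

/-! ### Interval model of concatenations along a directed path -/

/-- An interval `(s, t)` on the line `ℕ`: the model of a subpath of a fixed
directed path `T`, going from vertex `s` to vertex `t`. -/
abbrev Iv := ℕ × ℕ

/-- `R` is a reduced set of relations along a directed path: every relation is a
path of length at least two, and no relation divides another one. -/
structure RelSet (R : Set Iv) : Prop where
  len : ∀ r ∈ R, r.1 + 2 ≤ r.2
  nodiv : ∀ r ∈ R, ∀ r' ∈ R, r.1 ≤ r'.1 → r'.2 ≤ r.2 → r = r'

/-- The window from which the `(i+1)`-st relation (0-based index `i ≥ 1`) of a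
concatenation is chosen: `L_1 = {p ∈ R : s(p_1) < s(p) < t(p_1)}` and
`L_{j+1} = {p ∈ R : t(p_{j-1}) ≤ s(p) < t(p_j)}`. -/
def cWindow (R : Set Iv) (p : ℕ → Iv) (i : ℕ) : Set Iv :=
  if i = 1 then {q | q ∈ R ∧ (p 0).1 < q.1 ∧ q.1 < (p 0).2}
  else {q | q ∈ R ∧ (p (i - 2)).2 ≤ q.1 ∧ q.1 < (p (i - 1)).2}

/-- `IsConcat R k p` : the relations `p 0, p 1, …, p (k-1)` form a
`(k+1)`-concatenation `(p_1, …, p_k)` in Bardzell's sense: each `p i` (for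
`1 ≤ i < k`) is a relation of the corresponding window with minimal source. -/
def IsConcat (R : Set Iv) (k : ℕ) (p : ℕ → Iv) : Prop :=
  p 0 ∈ R ∧ ∀ i, 1 ≤ i → i < k →
    (p i ∈ cWindow R p i ∧ ∀ q ∈ cWindow R p i, (p i).1 ≤ q.1)

/-- The dual window: `L_1^{op} = {q ∈ R : s(q_1) < t(q) < t(q_1)}` and
`L_{j+1}^{op} = {q ∈ R : s(q_j) < t(q) ≤ s(q_{j-1})}`. -/
def oWindow (R : Set Iv) (q : ℕ → Iv) (i : ℕ) : Set Iv :=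
  if i = 1 then {r | r ∈ R ∧ (q 0).1 < r.2 ∧ r.2 < (q 0).2}
  else {r | r ∈ R ∧ (q (i - 1)).1 < r.2 ∧ r.2 ≤ (q (i - 2)).1}

/-- `IsOpConcat R k q` : the relations `q 0, …, q (k-1)` form a
`(k+1)`-op-concatenation `(q_{k}, …, q_1)` (so `q 0 = q_k` is built first and
`q^j = q (k - j)` in the paper's upper-index notation): each `q i` (for
`1 ≤ i < k`) is a relation of the corresponding dual window with maximal
target. -/
def IsOpConcat (R : Set Iv) (k : ℕ) (q : ℕ → Iv) : Prop :=
  q 0 ∈ R ∧ ∀ i, 1 ≤ i → i < k →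
    (q i ∈ oWindow R q i ∧ ∀ r ∈ oWindow R q i, r.2 ≤ (q i).2)

/-- `IsSupport R n w` : the interval `w` is the support of an
`n`-concatenation (for `n = 0` a vertex, for `n = 1` an arrow). -/
def IsSupport (R : Set Iv) : ℕ → Iv → Prop
  | 0, w => w.2 = w.1
  | 1, w => w.2 = w.1 + 1
  | (n + 2), w => ∃ p : ℕ → Iv, IsConcat R (n + 1) p ∧ (p 0).1 = w.1 ∧ (p n).2 = w.2

/-- `IsOpSupport R n w` : the interval `w` is the support of an
`n`-op-concatenation. -/
def IsOpSupport (R : Set Iv) : ℕ → Iv → Prop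
  | 0, w => w.2 = w.1
  | 1, w => w.2 = w.1 + 1
  | (n + 2), w => ∃ q : ℕ → Iv, IsOpConcat R (n + 1) q ∧ (q n).1 = w.1 ∧ (q 0).2 = w.2

/-! ### The combinatorial model of a monomial (string) bound quiver -/

/-- A finite quiver, given by raw data. -/
structure QuivData where
  V : Type
  E : Type
  src : E → V
  tgt : E → V

variable (Q : QuivData)

/-- A (nontrivial) path in `Q`: a nonempty composable list of arrows. -/
def IsPathL (l : List Q.E) : Prop :=
  l ≠ [] ∧ l.Chain' fun a b => Q.tgt a = Q.src b

/-- The source vertex of a nonempty list of arrows (as an `Option`). -/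
def psrc (l : List Q.E) : Option Q.V := l.head?.map Q.src

/-- The target vertex of a nonempty list of arrows (as an `Option`). -/
def ptgt (l : List Q.E) : Option Q.V := l.getLast?.map Q.tgt

/-- `l` lies in the (monomial) ideal `I = ⟨R⟩`: some relation divides `l`. -/
def inI (R : Set (List Q.E)) (l : List Q.E) : Prop := ∃ r ∈ R, r <:+: l

/-- `l` belongs to the canonical basis `𝒫` of `A = kQ/I`: a nontrivial path
not in `I`.  (Trivial paths `e_x` are treated separately.) -/
def isP (R : Set (List Q.E)) (l : List Q.E) : Prop := IsPathL Q l ∧ ¬ inI Q R l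

/-- `(Q, R)` presents a **triangular string algebra**: relations are paths of
length `≥ 2`, form a reduced (minimal) generating set, the string conditions
S1), S2) hold, and `Q` has no oriented cycles. -/
structure StringData (R : Set (List Q.E)) : Prop where
  relPath : ∀ r ∈ R, IsPathL Q r ∧ 2 ≤ r.length
  relMin : ∀ r ∈ R, ∀ r' ∈ R, r' <:+: r → r' = r
  srcTwo : ∀ v : Q.V, ∀ a b c : Q.E, Q.src a = v → Q.src b = v → Q.src c = v →
    a = b ∨ a = c ∨ b = c
  tgtTwo : ∀ v : Q.V, ∀ a b c : Q.E, Q.tgt a = v → Q.tgt b = v → Q.tgt c = v →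
    a = b ∨ a = c ∨ b = c
  uniqRight : ∀ a b c : Q.E, Q.tgt a = Q.src b → Q.tgt a = Q.src c →
    [a, b] ∉ R → [a, c] ∉ R → b = c
  uniqLeft : ∀ a b c : Q.E, Q.tgt b = Q.src a → Q.tgt c = Q.src a →
    [b, a] ∉ R → [c, a] ∉ R → b = c
  triangular : ∀ l : List Q.E, IsPathL Q l → psrc Q l ≠ ptgt Q l

/-- The subpath of `l` occupying the positions `[c.1, c.2)`. -/
def slice (l : List Q.E) (c : Iv) : List Q.E := (l.drop c.1).take (c.2 - c.1)

/-- The intervals of positions of `w` occupied by relations of `R`. -/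
def relIvs (R : Set (List Q.E)) (w : List Q.E) : Set Iv :=
  {c | c.1 < c.2 ∧ c.2 ≤ w.length ∧ slice Q w c ∈ R}

/-- `w ∈ AP_n` : `w` is the support of an `n`-concatenation of relations of
`R` (for `n = 1`, an arrow; the vertices `AP_0` are treated separately). -/
def IsAP (R : Set (List Q.E)) : ℕ → List Q.E → Prop
  | 0, _ => False
  | 1, w => IsPathL Q w ∧ w.length = 1
  | (n + 2), w => IsPathL Q w ∧ IsSupport (relIvs Q R w) (n + 2) (0, w.length)

/-- `w ∈ AP_n^{op}` : `w` is the support of an `n`-op-concatenation. -/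
def IsAPop (R : Set (List Q.E)) : ℕ → List Q.E → Prop
  | 0, _ => False
  | 1, w => IsPathL Q w ∧ w.length = 1
  | (n + 2), w => IsPathL Q w ∧ IsOpSupport (relIvs Q R w) (n + 2) (0, w.length)

/-- A pair of parallel paths. -/
abbrev Pr := List Q.E × List Q.E

/-- The set `(AP_n ∥ 𝒫)` of pairs `(ρ, γ)` with `ρ ∈ AP_n`, `γ ∈ 𝒫` and
`ρ, γ` parallel; it indexes a basis of `Hom_{E-E}(kAP_n, A)`. -/
def PairSet (R : Set (List Q.E)) (n : ℕ) : Set (Pr Q) :=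
  {x | IsAP Q R n x.1 ∧ isP Q R x.2 ∧ psrc Q x.1 = psrc Q x.2 ∧ ptgt Q x.1 = ptgt Q x.2}

/-- `ρ` and `γ` have the same first arrow. -/
def sharesFirst (x : Pr Q) : Prop := x.1.head? = x.2.head?

/-- `ρ` and `γ` have the same last arrow. -/
def sharesLast (x : Pr Q) : Prop := x.1.getLast? = x.2.getLast?

/-- The class `(0,0)_n`. -/
def cls00 (R : Set (List Q.E)) (n : ℕ) : Set (Pr Q) :=
  {x ∈ PairSet Q R n | ¬ sharesFirst Q x ∧ ¬ sharesLast Q x}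

/-- The class `(1,0)_n`. -/
def cls10 (R : Set (List Q.E)) (n : ℕ) : Set (Pr Q) :=
  {x ∈ PairSet Q R n | sharesFirst Q x ∧ ¬ sharesLast Q x}

/-- The class `(0,1)_n`. -/
def cls01 (R : Set (List Q.E)) (n : ℕ) : Set (Pr Q) :=
  {x ∈ PairSet Q R n | ¬ sharesFirst Q x ∧ sharesLast Q x}

/-- The class `(1,1)_n`. -/
def cls11 (R : Set (List Q.E)) (n : ℕ) : Set (Pr Q) :=
  {x ∈ PairSet Q R n | sharesFirst Q x ∧ sharesLast Q x}

/-- `Q_1 · γ ⊆ I` (left decoration `⁻`). -/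
def leftI (R : Set (List Q.E)) (γ : List Q.E) : Prop :=
  ∀ b : Q.E, some (Q.tgt b) = psrc Q γ → inI Q R (b :: γ)

/-- `γ · Q_1 ⊆ I` (right decoration `⁻`). -/
def rightI (R : Set (List Q.E)) (γ : List Q.E) : Prop :=
  ∀ b : Q.E, some (Q.src b) = ptgt Q γ → inI Q R (γ ++ [b])

/-- `Q_1 · γ̂ ⊆ I` where `γ = γ̂ α₂`, i.e. `γ̂ = γ.dropLast`. -/
def leftIHat (R : Set (List Q.E)) (γ : List Q.E) : Prop :=
  ∀ b : Q.E, some (Q.tgt b) = psrc Q γ → inI Q R (b :: γ.dropLast)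

/-- `γ̂ · Q_1 ⊆ I` where `γ = α₁ γ̂`, i.e. `γ̂ = γ.tail`. -/
def rightIHat (R : Set (List Q.E)) (γ : List Q.E) : Prop :=
  ∀ b : Q.E, some (Q.src b) = ptgt Q γ → inI Q R (γ.tail ++ [b])

/-- `⁻(0,0)⁻_n`. -/
def mm00 (R : Set (List Q.E)) (n : ℕ) : Set (Pr Q) :=
  {x ∈ cls00 Q R n | leftI Q R x.2 ∧ rightI Q R x.2}

/-- `⁻(0,1)_n`. -/
def m01 (R : Set (List Q.E)) (n : ℕ) : Set (Pr Q) :=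
  {x ∈ cls01 Q R n | leftI Q R x.2}

/-- `⁺⁻(0,1)_n`. -/
def pm01 (R : Set (List Q.E)) (n : ℕ) : Set (Pr Q) :=
  {x ∈ cls01 Q R n | leftI Q R x.2 ∧ ¬ leftIHat Q R x.2}

/-- `⁻⁻(0,1)_n`. -/
def mm01 (R : Set (List Q.E)) (n : ℕ) : Set (Pr Q) :=
  {x ∈ cls01 Q R n | leftI Q R x.2 ∧ leftIHat Q R x.2}

/-- `(1,0)_n⁻`. -/
def m10 (R : Set (List Q.E)) (n : ℕ) : Set (Pr Q) :=
  {x ∈ cls10 Q R n | rightI Q R x.2}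

/-! ### The Hochschild complex obtained from Bardzell's resolution -/

variable (k : Type) [Field k]

/-- The `(y, x)` matrix entry of the differential `F_n` of the Hochschild
complex: for `x = (w, γ) ∈ (AP_n ∥ 𝒫)` and `y = (ψ, γ') ∈ (AP_{n-1} ∥ 𝒫)`, the
signed number of ways of dividing `w = L(ψ) ψ R(ψ)` (with `L, R` not both
trivial) so that `γ = L(ψ) γ' R(ψ)`; the sign is `(-1)^n` for the division
with trivial `L(ψ)` (this reproduces `F_{2m}` and `F_{2m+1}` of the paper). -/
def coeffF (R : Set (List Q.E)) (n : ℕ) (y x : Pr Q) : k :=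
  ∑ᶠ c : Iv,
    if c.1 < c.2 ∧ c.2 ≤ x.1.length ∧ ¬(c.1 = 0 ∧ c.2 = x.1.length) ∧
        y.1 = slice Q x.1 c ∧ x.2 = x.1.take c.1 ++ y.2 ++ x.1.drop c.2 then
      (if c.1 = 0 then (-1 : k) ^ n else 1)
    else 0

/-- The differential `F_n : Hom_{E-E}(kAP_{n-1}, A) → Hom_{E-E}(kAP_n, A)`
(`n ≥ 2`), in the bases `(AP_{n-1} ∥ 𝒫)`, `(AP_n ∥ 𝒫)`. -/
def F (R : Set (List Q.E)) (n : ℕ) [Fintype ↥(PairSet Q R (n - 1))] :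
    (↥(PairSet Q R (n - 1)) → k) →ₗ[k] (↥(PairSet Q R n) → k) :=
  Matrix.mulVecLin (Matrix.of fun x y => coeffF Q k R n y.val x.val)

/-- The differential `F_1 : Hom_{E-E}(kAP_0, A) → Hom_{E-E}(kAP_1, A)`; for a
triangular algebra `Hom_{E-E}(kAP_0, A) ≅ kQ_0`. -/
def F1 (R : Set (List Q.E)) [Fintype Q.V] [Fintype ↥(PairSet Q R 1)] :
    (Q.V → k) →ₗ[k] (↥(PairSet Q R 1) → k) :=
  Matrix.mulVecLin (Matrix.of fun x v =>
    if x.val.2 = x.val.1 then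
      (if ptgt Q x.val.1 = some v then (1 : k) else 0) -
        (if psrc Q x.val.1 = some v then (1 : k) else 0)
    else 0)

/-- `HH^0(A) = Ker F_1`. -/
abbrev HH0 (R : Set (List Q.E)) [Fintype Q.V] [Fintype ↥(PairSet Q R 1)] :=
  ↥(LinearMap.ker (F1 Q k R))

/-- `HH^1(A) = Ker F_2 / Im F_1`. -/
abbrev HH1 (R : Set (List Q.E)) [Fintype Q.V] [∀ j, Fintype ↥(PairSet Q R j)] :=
  ↥(LinearMap.ker (F Q k R 2)) ⧸
    Submodule.comap (LinearMap.ker (F Q k R 2)).subtype (LinearMap.range (F1 Q k R))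

/-- `HH^n(A) = Ker F_{n+1} / Im F_n` for `n ≥ 2`. -/
abbrev HHn (R : Set (List Q.E)) (n : ℕ) [∀ j, Fintype ↥(PairSet Q R j)] :=
  ↥(LinearMap.ker (F Q k R (n + 1))) ⧸
    Submodule.comap (LinearMap.ker (F Q k R (n + 1))).subtype (LinearMap.range (F Q k R n))

/-- The underlying graph of `Q` is connected. -/
def connectedQ : Prop :=
  (SimpleGraph.fromRel fun u v => ∃ a : Q.E, Q.src a = u ∧ Q.tgt a = v).Connected

/-- The underlying graph of the finite quiver `Q` is a tree (connected with
`|Q_1| = |Q_0| - 1`). -/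
def IsTreeQuiv [Fintype Q.V] [Fintype Q.E] : Prop :=
  connectedQ Q ∧ Fintype.card Q.E + 1 = Fintype.card Q.V

/-- A monomial algebra is simply connected iff its quiver is a tree; we use
this characterization as the definition of simple connectedness. -/
def SimplyConnected [Fintype Q.V] [Fintype Q.E] : Prop := IsTreeQuiv Q


/-!
Read the concatenation `p 0, …, p K` from the right: starting from `p K` and choosing each
further relation with maximal target in its window gives an op-concatenation `q 0, …, q K`
with the same end, and by induction on `j` the relation `q j` is interlaced with
`p (K - j)`: for `j > 0` its target lies in `[t(p (K - j)), t(p (K - j + 1)))`.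
A concatenation is determined by its start and an op-concatenation by its end, so `w'` has
to end where the support of `p 0, …, p (n - 2)` ends and `w''` has to start where the
support of `q 0, …, q (m - 2)` starts. The interlacing places both points strictly inside
`p (n - 1)` and `q (m - 1)`, and a relation inside `u` would be strictly nested in `p (n - 1)`.
-/

namespace RelSet

variable {R : Set Iv} {r r' : Iv}

lemma src_lt_iff_tgt_lt (hR : RelSet R) (hr : r ∈ R) (hr' : r' ∈ R) :
    r.1 < r'.1 ↔ r.2 < r'.2 := by
  constructor
  · intro h
    by_contra h'
    obtain rfl := hR.nodiv r hr r' hr' h.le (not_lt.1 h')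
    exact lt_irrefl _ h
  · intro h
    by_contra h'
    obtain rfl := hR.nodiv r' hr' r hr (not_lt.1 h') h.le
    exact lt_irrefl _ h

lemma src_le_iff_tgt_le (hR : RelSet R) (hr : r ∈ R) (hr' : r' ∈ R) :
    r.1 ≤ r'.1 ↔ r.2 ≤ r'.2 := by
  simpa only [not_lt] using (hR.src_lt_iff_tgt_lt hr' hr).not

lemma eq_of_src_eq (hR : RelSet R) (hr : r ∈ R) (hr' : r' ∈ R) (h : r.1 = r'.1) : r = r' :=
  hR.nodiv r hr r' hr' h.le ((hR.src_le_iff_tgt_le hr' hr).1 h.ge)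

lemma eq_of_tgt_eq (hR : RelSet R) (hr : r ∈ R) (hr' : r' ∈ R) (h : r.2 = r'.2) : r = r' :=
  hR.eq_of_src_eq hr hr' (le_antisymm ((hR.src_le_iff_tgt_le hr hr').2 h.le)
    ((hR.src_le_iff_tgt_le hr' hr).2 h.ge))

lemma not_le_of_strictly_inside (hR : RelSet R) (hr : r ∈ R) {a b : ℕ} (ha : r.1 < a)
    (hb : b < r.2) : ∀ r' ∈ R, ¬(a ≤ r'.1 ∧ r'.2 ≤ b) := by
  rintro r' hr' ⟨h₁, h₂⟩
  obtain rfl := hR.nodiv r hr r' hr' (by omega) (by omega)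
  omega

end RelSet

section Windows

variable {R : Set Iv} {p : ℕ → Iv} {i : ℕ}

@[simp]
lemma cWindow_one : cWindow R p 1 = {x | x ∈ R ∧ (p 0).1 < x.1 ∧ x.1 < (p 0).2} := rfl

@[simp]
lemma cWindow_add_two :
    cWindow R p (i + 2) = {x | x ∈ R ∧ (p i).2 ≤ x.1 ∧ x.1 < (p (i + 1)).2} := by
  simp [cWindow]

@[simp]
lemma oWindow_one : oWindow R p 1 = {x | x ∈ R ∧ (p 0).1 < x.2 ∧ x.2 < (p 0).2} := rfl

@[simp]
lemma oWindow_add_two :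
    oWindow R p (i + 2) = {x | x ∈ R ∧ (p (i + 1)).1 < x.2 ∧ x.2 ≤ (p i).1} := by
  simp [oWindow]

lemma mem_of_mem_cWindow {x : Iv} (hx : x ∈ cWindow R p i) : x ∈ R := by
  unfold cWindow at hx
  split_ifs at hx <;> exact hx.1

lemma mem_of_mem_oWindow {x : Iv} (hx : x ∈ oWindow R p i) : x ∈ R := by
  unfold oWindow at hx
  split_ifs at hx <;> exact hx.1

lemma oWindow_bddAbove : BddAbove (Prod.snd '' oWindow R p i) := by
  refine ⟨max (p 0).2 (p (i - 2)).1, ?_⟩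
  rintro _ ⟨x, hx, rfl⟩
  unfold oWindow at hx
  split_ifs at hx
  · exact le_max_of_le_left hx.2.2.le
  · exact le_max_of_le_right hx.2.2

end Windows

namespace IsConcat

variable {R : Set Iv} {k : ℕ} {p : ℕ → Iv} {i : ℕ}

lemma mem (hp : IsConcat R k p) (hi : i < k) : p i ∈ R := by
  rcases i with _ | i
  · exact hp.1
  · exact mem_of_mem_cWindow (hp.2 (i + 1) (by omega) hi).1

lemma mono (hp : IsConcat R k p) {k' : ℕ} (hk : k' ≤ k) : IsConcat R k' p :=
  ⟨hp.1, fun i h₁ h₂ => hp.2 i h₁ (h₂.trans_le hk)⟩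

lemma src_lt_tgt (hp : IsConcat R k p) (hi : i + 1 < k) : (p (i + 1)).1 < (p i).2 := by
  rcases i with _ | i
  · simpa using (hp.2 1 le_rfl hi).1.2.2
  · simpa using (hp.2 (i + 2) (by omega) hi).1.2.2

lemma tgt_le_src (hp : IsConcat R k p) (hi : i + 2 < k) : (p i).2 ≤ (p (i + 2)).1 := by
  simpa using (hp.2 (i + 2) (by omega) hi).1.2.1

lemma src_lt_src (hp : IsConcat R k p) (hi : i + 1 < k) : (p i).1 < (p (i + 1)).1 := by
  rcases i with _ | i
  · simpa using (hp.2 1 le_rfl hi).1.2.1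
  · show (p (i + 1)).1 < (p (i + 2)).1
    have := hp.tgt_le_src hi
    have := hp.src_lt_tgt (i := i) (by omega)
    omega

lemma tgt_lt_tgt (hR : RelSet R) (hp : IsConcat R k p) (hi : i + 1 < k) :
    (p i).2 < (p (i + 1)).2 :=
  (hR.src_lt_iff_tgt_lt (hp.mem (by omega)) (hp.mem hi)).1 (hp.src_lt_src hi)

lemma src_zero_le (hp : IsConcat R k p) (hi : i < k) : (p 0).1 ≤ (p i).1 := by
  induction i with
  | zero => exact le_rfl
  | succ i ih => exact (ih (by omega)).trans (hp.src_lt_src hi).le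

/-- Otherwise `x` would lie in the window of `p (i + 2)` and have a smaller source. -/
lemma src_lt_tgt_of_tgt_lt (hR : RelSet R) (hp : IsConcat R k p) (hi : i + 2 < k) {x : Iv}
    (hx : x ∈ R) (h : x.2 < (p (i + 2)).2) : x.1 < (p i).2 := by
  by_contra hle
  have hlt : x.1 < (p (i + 1)).2 := by
    by_contra h'
    have : (p (i + 2)).1 < (p (i + 1)).2 := hp.src_lt_tgt hi
    have := (hR.src_lt_iff_tgt_lt (hp.mem hi) hx).1 (by omega)
    omega
  have hmin := (hp.2 (i + 2) (by omega) hi).2 x (by simp [hx, not_lt.1 hle, hlt])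
  exact absurd ((hR.src_le_iff_tgt_le (hp.mem hi) hx).1 hmin) (not_le.2 h)

theorem eq_of_src_eq (hR : RelSet R) {k₁ k₂ : ℕ} {p₁ p₂ : ℕ → Iv} (hp₁ : IsConcat R k₁ p₁)
    (hp₂ : IsConcat R k₂ p₂) (h₀ : (p₁ 0).1 = (p₂ 0).1) :
    ∀ i, i < k₁ → i < k₂ → p₁ i = p₂ i := by
  intro i
  induction i using Nat.strong_induction_on with
  | _ i ih =>
    intro hi₁ hi₂
    rcases Nat.eq_zero_or_pos i with rfl | hi
    · exact hR.eq_of_src_eq hp₁.1 hp₂.1 h₀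
    have hW : cWindow R p₁ i = cWindow R p₂ i := by
      obtain rfl | ⟨i, rfl⟩ : i = 1 ∨ ∃ i', i = i' + 2 := by
        rcases i with _ | _ | i <;> simp_all
      · rw [cWindow_one, cWindow_one, ih 0 hi (by omega) (by omega)]
      · rw [cWindow_add_two, cWindow_add_two, ih i (by omega) (by omega) (by omega),
          ih (i + 1) (by omega) (by omega) (by omega)]
    obtain ⟨hmem₁, hmin₁⟩ := hp₁.2 i hi hi₁
    obtain ⟨hmem₂, hmin₂⟩ := hp₂.2 i hi hi₂
    rw [hW] at hmem₁ hmin₁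
    exact hR.eq_of_src_eq (hp₁.mem hi₁) (hp₂.mem hi₂)
      (le_antisymm (hmin₁ _ hmem₂) (hmin₂ _ hmem₁))

end IsConcat

namespace IsOpConcat

variable {R : Set Iv} {k : ℕ} {q : ℕ → Iv} {j : ℕ}

lemma mem (hq : IsOpConcat R k q) (hj : j < k) : q j ∈ R := by
  rcases j with _ | j
  · exact hq.1
  · exact mem_of_mem_oWindow (hq.2 (j + 1) (by omega) hj).1

lemma mono (hq : IsOpConcat R k q) {k' : ℕ} (hk : k' ≤ k) : IsOpConcat R k' q :=
  ⟨hq.1, fun i h₁ h₂ => hq.2 i h₁ (h₂.trans_le hk)⟩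

lemma src_lt_tgt (hq : IsOpConcat R k q) (hj : j + 1 < k) : (q j).1 < (q (j + 1)).2 := by
  rcases j with _ | j
  · simpa using (hq.2 1 le_rfl hj).1.2.1
  · simpa using (hq.2 (j + 2) (by omega) hj).1.2.1

lemma tgt_lt_tgt (hq : IsOpConcat R k q) (hj : j + 1 < k) : (q (j + 1)).2 < (q j).2 := by
  rcases j with _ | j
  · simpa using (hq.2 1 le_rfl hj).1.2.2
  · show (q (j + 2)).2 < (q (j + 1)).2
    have : (q (j + 2)).2 ≤ (q j).1 := by simpa using (hq.2 (j + 2) (by omega) hj).1.2.2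
    have := hq.src_lt_tgt (j := j) (by omega)
    omega

lemma src_lt_src (hR : RelSet R) (hq : IsOpConcat R k q) (hj : j + 1 < k) :
    (q (j + 1)).1 < (q j).1 :=
  (hR.src_lt_iff_tgt_lt (hq.mem hj) (hq.mem (by omega))).2 (hq.tgt_lt_tgt hj)

lemma tgt_le_tgt_zero (hq : IsOpConcat R k q) (hj : j < k) : (q j).2 ≤ (q 0).2 := by
  induction j with
  | zero => exact le_rfl
  | succ j ih => exact (hq.tgt_lt_tgt hj).le.trans (ih (by omega))

theorem eq_of_tgt_eq (hR : RelSet R) {k₁ k₂ : ℕ} {q₁ q₂ : ℕ → Iv} (hq₁ : IsOpConcat R k₁ q₁)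
    (hq₂ : IsOpConcat R k₂ q₂) (h₀ : (q₁ 0).2 = (q₂ 0).2) :
    ∀ j, j < k₁ → j < k₂ → q₁ j = q₂ j := by
  intro j
  induction j using Nat.strong_induction_on with
  | _ j ih =>
    intro hj₁ hj₂
    rcases Nat.eq_zero_or_pos j with rfl | hj
    · exact hR.eq_of_tgt_eq hq₁.1 hq₂.1 h₀
    have hW : oWindow R q₁ j = oWindow R q₂ j := by
      obtain rfl | ⟨j, rfl⟩ : j = 1 ∨ ∃ j', j = j' + 2 := by
        rcases j with _ | _ | j <;> simp_all
      · rw [oWindow_one, oWindow_one, ih 0 hj (by omega) (by omega)]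
      · rw [oWindow_add_two, oWindow_add_two, ih j (by omega) (by omega) (by omega),
          ih (j + 1) (by omega) (by omega) (by omega)]
    obtain ⟨hmem₁, hmax₁⟩ := hq₁.2 j hj hj₁
    obtain ⟨hmem₂, hmax₂⟩ := hq₂.2 j hj hj₂
    rw [hW] at hmem₁ hmax₁
    exact hR.eq_of_tgt_eq (hq₁.mem hj₁) (hq₂.mem hj₂)
      (le_antisymm (hmax₂ _ hmem₁) (hmax₁ _ hmem₂))

end IsOpConcat

/-- The end of the support of the `n`-concatenation `(p 0, …, p (n - 2))`. -/
def concatEnd (p : ℕ → Iv) : ℕ → ℕ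
  | 0 => (p 0).1
  | 1 => (p 0).1 + 1
  | n + 2 => (p n).2

/-- The start of the support of the `m`-op-concatenation `(q 0, …, q (m - 2))`. -/
def opConcatStart (q : ℕ → Iv) : ℕ → ℕ
  | 0 => (q 0).2
  | 1 => (q 0).2 - 1
  | m + 2 => (q m).1

namespace IsConcat

variable {R : Set Iv} {k : ℕ} {p : ℕ → Iv} {n : ℕ}

theorem isSupport_iff (hR : RelSet R) (hp : IsConcat R k p) (hn : n ≤ k + 1) {x : ℕ} :
    IsSupport R n ((p 0).1, x) ↔ x = concatEnd p n := by
  match n with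
  | 0 => exact Iff.rfl
  | 1 => exact Iff.rfl
  | n + 2 =>
    constructor
    · rintro ⟨p', hp', h₀, rfl⟩
      exact congrArg Prod.snd (hp'.eq_of_src_eq hR hp h₀ n (by omega) (by omega))
    · rintro rfl
      exact ⟨p, hp.mono (by omega), rfl, rfl⟩

lemma src_zero_le_concatEnd (hR : RelSet R) (hp : IsConcat R k p) (hn : n ≤ k + 1) :
    (p 0).1 ≤ concatEnd p n := by
  match n with
  | 0 => exact le_rfl
  | 1 => exact Nat.le_succ _
  | n + 2 =>
    have := hp.src_zero_le (i := n) (by omega)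
    have := hR.len _ (hp.mem (i := n) (by omega))
    simp only [concatEnd]
    omega

lemma concatEnd_le_src (hp : IsConcat R k p) (hn : n < k) : concatEnd p n ≤ (p n).1 := by
  match n with
  | 0 => exact le_rfl
  | 1 => exact hp.src_lt_src (i := 0) hn
  | n + 2 => exact hp.tgt_le_src hn

lemma concatEnd_succ_mem_Ioo (hR : RelSet R) (hp : IsConcat R k p) (hn : n < k) :
    concatEnd p (n + 1) ∈ Set.Ioo (p n).1 (p n).2 := by
  match n with
  | 0 =>
    have := hR.len _ hp.1
    simp only [concatEnd, Set.mem_Ioo]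
    omega
  | n + 1 => exact ⟨hp.src_lt_tgt hn, hp.tgt_lt_tgt hR hn⟩

end IsConcat

namespace IsOpConcat

variable {R : Set Iv} {k : ℕ} {q : ℕ → Iv} {m : ℕ}

theorem isOpSupport_iff (hR : RelSet R) (hq : IsOpConcat R k q) (hm : m ≤ k + 1) {x : ℕ} :
    IsOpSupport R m (x, (q 0).2) ↔ x = opConcatStart q m := by
  match m with
  | 0 => exact eq_comm
  | 1 =>
    have := hR.len _ hq.1
    simp only [IsOpSupport, opConcatStart]
    omega
  | m + 2 =>
    constructor
    · rintro ⟨q', hq', rfl, h₀⟩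
      exact congrArg Prod.fst (hq'.eq_of_tgt_eq hR hq h₀ m (by omega) (by omega))
    · rintro rfl
      exact ⟨q, hq.mono (by omega), rfl, rfl⟩

lemma opConcatStart_le (hR : RelSet R) (hq : IsOpConcat R k q) (hm : m ≤ k + 1) :
    opConcatStart q m ≤ (q 0).2 := by
  match m with
  | 0 => exact le_rfl
  | 1 => exact Nat.sub_le _ _
  | m + 2 =>
    have := hq.tgt_le_tgt_zero (j := m) (by omega)
    have := hR.len _ (hq.mem (j := m) (by omega))
    simp only [opConcatStart]
    omega

lemma opConcatStart_succ_mem_Ioo (hR : RelSet R) (hq : IsOpConcat R k q) (hm : m < k) :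
    opConcatStart q (m + 1) ∈ Set.Ioo (q m).1 (q m).2 := by
  match m with
  | 0 =>
    have := hR.len _ hq.1
    simp only [opConcatStart, Set.mem_Ioo]
    omega
  | m + 1 => exact ⟨hq.src_lt_src hR hm, hq.src_lt_tgt hm⟩

end IsOpConcat

def argmaxTgt (S : Set Iv) : Iv :=
  Classical.epsilon fun r => r ∈ S ∧ ∀ r' ∈ S, r'.2 ≤ r.2

lemma argmaxTgt_spec {S : Set Iv} (hne : S.Nonempty) (hS : BddAbove (Prod.snd '' S)) :
    argmaxTgt S ∈ S ∧ ∀ r ∈ S, r.2 ≤ (argmaxTgt S).2 := by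
  obtain ⟨_, ⟨r, hr, rfl⟩, hmax⟩ := hS.exists_isGreatest_of_nonempty (hne.image _)
  exact Classical.epsilon_spec (p := fun r => r ∈ S ∧ ∀ r' ∈ S, r'.2 ≤ r.2)
    ⟨r, hr, fun r' hr' => hmax ⟨r', hr', rfl⟩⟩

/-- The op-concatenation of the identification lemma, built from its rightmost relation `r`. -/
def opChain (R : Set Iv) (r : Iv) : ℕ → Iv
  | 0 => r
  | 1 => argmaxTgt {x | x ∈ R ∧ r.1 < x.2 ∧ x.2 < r.2}
  | j + 2 => argmaxTgt {x | x ∈ R ∧ (opChain R r (j + 1)).1 < x.2 ∧ x.2 ≤ (opChain R r j).1}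

section OpChain

variable {R : Set Iv} {r : Iv} {j : ℕ}

lemma opChain_eq_argmaxTgt (hj : 0 < j) :
    opChain R r j = argmaxTgt (oWindow R (opChain R r) j) := by
  match j with
  | 1 => rfl
  | j + 2 => simp [opChain]

lemma opChain_isGreatest (hj : 0 < j) (hne : (oWindow R (opChain R r) j).Nonempty) :
    opChain R r j ∈ oWindow R (opChain R r) j ∧
      ∀ x ∈ oWindow R (opChain R r) j, x.2 ≤ (opChain R r j).2 := by
  rw [opChain_eq_argmaxTgt hj]
  exact argmaxTgt_spec hne oWindow_bddAbove

end OpChain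

def Interlaced (R : Set Iv) (p q : ℕ → Iv) (i j : ℕ) : Prop :=
  q j ∈ R ∧ (p i).2 ≤ (q j).2 ∧ (0 < j → p i ∈ oWindow R q j ∧ (q j).2 < (p (i + 1)).2)

namespace IsConcat

variable {R : Set Iv} {K : ℕ} {p : ℕ → Iv} {i j n m : ℕ}

lemma src_le_of_interlaced (hR : RelSet R) (hp : IsConcat R (K + 1) p) (hi : i ≤ K)
    {q : ℕ → Iv} (h : Interlaced R p q i j) : (p i).1 ≤ (q j).1 :=
  (hR.src_le_iff_tgt_le (hp.mem (by omega)) h.1).2 h.2.1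

lemma opChain_src_lt_of_interlaced (hR : RelSet R) (hp : IsConcat R (K + 1) p)
    (hij : i + 1 + j = K) (h : Interlaced R p (opChain R (p K)) (i + 1) j) :
    (opChain R (p K) j).1 < (p i).2 := by
  rcases Nat.eq_zero_or_pos j with rfl | hj
  · subst hij
    exact hp.src_lt_tgt (by omega)
  · exact hp.src_lt_tgt_of_tgt_lt hR (by omega) h.1 (h.2.2 hj).2

/-- `p i` is a candidate in the window of `q j`, and the maximal choice of `q j` cannot
overtake `p (i + 1)` because `q (j - 2)` does not. -/
theorem interlaced_opChain (hR : RelSet R) (hp : IsConcat R (K + 1) p) :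
    ∀ j i, i + j = K → Interlaced R p (opChain R (p K)) i j := by
  intro j
  induction j using Nat.strong_induction_on with
  | _ j ih =>
    intro i hij
    match j, ih with
    | 0, _ =>
      subst hij
      exact ⟨hp.mem (by omega), le_rfl, by omega⟩
    | 1, _ =>
      subst hij
      have hw : p i ∈ oWindow R (opChain R (p (i + 1))) 1 :=
        ⟨hp.mem (by omega), hp.src_lt_tgt (by omega), hp.tgt_lt_tgt hR (by omega)⟩
      obtain ⟨hmem, hmax⟩ := opChain_isGreatest one_pos ⟨_, hw⟩
      exact ⟨mem_of_mem_oWindow hmem, hmax _ hw, fun _ => ⟨hw, hmem.2.2⟩⟩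
    | j + 2, ih =>
      have h₀ := ih j (by omega) (i + 2) (by omega)
      have h₁ := ih (j + 1) (by omega) (i + 1) (by omega)
      have hU₀ := hp.opChain_src_lt_of_interlaced hR (i := i + 1) (by omega) h₀
      have hU₁ := hp.opChain_src_lt_of_interlaced hR (by omega) h₁
      have hS₀ := hp.src_le_of_interlaced hR (by omega) h₀
      have hw : p i ∈ oWindow R (opChain R (p K)) (j + 2) := by
        simpa [hp.mem (i := i) (by omega), hU₁] using
          (hp.tgt_le_src (i := i) (by omega)).trans hS₀
      obtain ⟨hmem, hmax⟩ := opChain_isGreatest (by omega) ⟨_, hw⟩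
      refine ⟨mem_of_mem_oWindow hmem, hmax _ hw, fun _ => ⟨hw, ?_⟩⟩
      rw [oWindow_add_two] at hmem
      exact hmem.2.2.trans_lt hU₀

lemma isOpConcat_opChain (hR : RelSet R) (hp : IsConcat R (K + 1) p) :
    IsOpConcat R (K + 1) (opChain R (p K)) :=
  ⟨hp.mem (by omega), fun j hj hjK => opChain_isGreatest hj
    ⟨p (K - j), ((hp.interlaced_opChain hR j (K - j) (by omega)).2.2 hj).1⟩⟩

lemma src_le_opChain (hR : RelSet R) (hp : IsConcat R (K + 1) p) (hij : i + j = K) :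
    (p i).1 ≤ (opChain R (p K) j).1 :=
  hp.src_le_of_interlaced hR (by omega) (hp.interlaced_opChain hR j i hij)

lemma opChain_src_lt (hR : RelSet R) (hp : IsConcat R (K + 1) p) (hij : i + 1 + j = K) :
    (opChain R (p K) j).1 < (p i).2 :=
  hp.opChain_src_lt_of_interlaced hR hij (hp.interlaced_opChain hR j (i + 1) (by omega))

lemma concatEnd_le_opConcatStart (hR : RelSet R) (hp : IsConcat R (K + 1) p)
    (hnm : n + m = K + 2) : concatEnd p n ≤ opConcatStart (opChain R (p K)) m := by
  match m with
  | 0 =>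
    obtain rfl : n = K + 2 := hnm
    exact le_rfl
  | 1 =>
    obtain rfl : n = K + 1 := by omega
    have := (hp.concatEnd_succ_mem_Ioo hR (n := K) (by omega)).2
    simp only [opConcatStart, opChain]
    omega
  | m + 2 => exact (hp.concatEnd_le_src (by omega)).trans (hp.src_le_opChain hR (by omega))

lemma opConcatStart_opChain_lt (hR : RelSet R) (hp : IsConcat R (K + 1) p) (hnm : n + m = K) :
    opConcatStart (opChain R (p K)) (m + 1) < (p n).2 := by
  match m with
  | 0 =>
    obtain rfl : n = K := hnm
    have := hR.len _ (hp.mem (i := n) (by omega))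
    simp only [opConcatStart, opChain]
    omega
  | m + 1 => exact hp.opChain_src_lt hR (by omega)

lemma src_lt_concatEnd_of_isOpConcat (hR : RelSet R) (hp : IsConcat R (K + 1) p)
    {q : ℕ → Iv} (hq : IsOpConcat R (K + 1) q) (hsrc : (q K).1 = (p 0).1)
    (htgt : (q 0).2 = (p K).2) (hnm : n + m = K) : (q m).1 < concatEnd p (n + 1) := by
  match n with
  | 0 =>
    obtain rfl : m = K := by omega
    simp only [concatEnd]
    omega
  | n + 1 =>
    rw [hq.eq_of_tgt_eq hR (hp.isOpConcat_opChain hR) htgt m (by omega) (by omega)]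
    exact hp.opChain_src_lt hR (by omega)

end IsConcat

/-- **Lemma (particion) / Statement 1.** For `n, m ≥ 0` with `n + m ≥ 2`, any
support `w(p_1, …, p_{n+m-1}) ∈ AP_{n+m}` factors uniquely as `w = w' u w''`
with `w' ∈ AP_n`, `w'' ∈ AP_m^{op}` and `u` a path (here: the interval
`[c.1, c.2]`).  Moreover, if `n, m ≥ 1` then `p_n = a u b` and `q^n = a' u b'`
with `a, a', b, b'` nontrivial, and hence `u ∉ I`. -/
theorem statement1 (R : Set Iv) (hR : RelSet R) (n m : ℕ) (hnm : 2 ≤ n + m)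
    (p : ℕ → Iv) (hp : IsConcat R (n + m - 1) p) :
    ∃ c : Iv,
      ((p 0).1 ≤ c.1 ∧ c.1 ≤ c.2 ∧ c.2 ≤ (p (n + m - 2)).2 ∧
        IsSupport R n ((p 0).1, c.1) ∧ IsOpSupport R m (c.2, (p (n + m - 2)).2)) ∧
      (∀ c' : Iv, (p 0).1 ≤ c'.1 → c'.1 ≤ c'.2 → c'.2 ≤ (p (n + m - 2)).2 →
        IsSupport R n ((p 0).1, c'.1) → IsOpSupport R m (c'.2, (p (n + m - 2)).2) →
        c' = c) ∧
      (1 ≤ n → 1 ≤ m →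
        ((p (n - 1)).1 < c.1 ∧ c.2 < (p (n - 1)).2) ∧
        (∀ q : ℕ → Iv, IsOpConcat R (n + m - 1) q → (q (n + m - 2)).1 = (p 0).1 →
          (q 0).2 = (p (n + m - 2)).2 → (q (m - 1)).1 < c.1 ∧ c.2 < (q (m - 1)).2) ∧
        ∀ r ∈ R, ¬(c.1 ≤ r.1 ∧ r.2 ≤ c.2)) := by
  obtain ⟨K, hK⟩ : ∃ K, n + m = K + 2 := ⟨n + m - 2, by omega⟩
  rw [show n + m - 1 = K + 1 by omega] at hp ⊢
  rw [show n + m - 2 = K by omega]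
  have hq := hp.isOpConcat_opChain hR
  have hsupp (x : ℕ) : IsSupport R n ((p 0).1, x) ↔ x = concatEnd p n :=
    hp.isSupport_iff hR (by omega)
  have hopsupp {q : ℕ → Iv} (hq : IsOpConcat R (K + 1) q) (htgt : (q 0).2 = (p K).2) (x : ℕ) :
      IsOpSupport R m (x, (p K).2) ↔ x = opConcatStart q m :=
    htgt ▸ hq.isOpSupport_iff hR (by omega)
  refine ⟨(concatEnd p n, opConcatStart (opChain R (p K)) m),
    ⟨hp.src_zero_le_concatEnd hR (by omega), hp.concatEnd_le_opConcatStart hR hK,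
      hq.opConcatStart_le hR (by omega), (hsupp _).2 rfl, (hopsupp hq rfl _).2 rfl⟩,
    fun c' _ _ _ h₁ h₂ => Prod.ext ((hsupp _).1 h₁) ((hopsupp hq rfl _).1 h₂), ?_⟩
  intro hn hm
  obtain ⟨n, rfl⟩ := Nat.exists_eq_add_of_le' hn
  obtain ⟨m, rfl⟩ := Nat.exists_eq_add_of_le' hm
  simp only [Nat.add_sub_cancel]
  have hpn := hp.concatEnd_succ_mem_Ioo hR (n := n) (by omega)
  have hlt := hp.opConcatStart_opChain_lt hR (n := n) (m := m) (by omega)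
  refine ⟨⟨hpn.1, hlt⟩, fun q' hq' hsrc htgt => ⟨?_, ?_⟩,
    hR.not_le_of_strictly_inside (hp.mem (by omega)) hpn.1 hlt⟩
  · exact hp.src_lt_concatEnd_of_isOpConcat hR hq' hsrc htgt (by omega)
  · rw [(hopsupp hq' htgt _).1 ((hopsupp hq rfl _).2 rfl)]
    exact (hq'.opConcatStart_succ_mem_Ioo hR (by omega)).2

end Paper
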